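/- Let n ≥ 1, N ≥ 2, and let H(z,x) be a convergent power series in (z,x) ∈ ℂ^n × ℂ with H(0,0) ≠ 0. For r = 1,…,N−1 let P_r be a polynomial in N variables whose coefficients are formal power series in x with no term independent of x and whose x-coefficients are convergent power series in z, and let χ_r(z,x) = Σ_{k≥0} χ_{r,k}(z) x^k with each χ_{r,k} convergent. Suppose F₁,…,F_N are formal power series F_l(z,x) = Σ_{k≥0} F_{l,k}(z) x^k (each F_{l,k} a formal power series in z) such that every F_{N,k} is convergent, and the following identities hold in ℂ[[z,x]]: (F₁ + F_N²)·H + P₁(F₁,…,F_N) = χ₁, and F_r·H + P_r(F₁,…,F_N) = χ_r for every r = 2,…,N−1. Then every coefficient series F_{l,k}(z), for 1 ≤ l ≤ N−1 and k ≥ 0, is a convergent power series. -/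

import Mathlib

/-!
STATEMENT 6.
Formal power series in `(z,x) ∈ ℂ^n × ℂ` are identified with elements of
`PowerSeries (MvPowerSeries (Fin n) ℂ)`; convergence means a geometric coefficient bound
(positive radius of convergence).

Let `H(z,x)` be convergent with `H(0,0) ≠ 0`.  For `r = 1,…,N−1` let `P_r` be a polynomial
in `N` variables whose coefficients are formal power series in `x` with no term independent
of `x` and with convergent `x`-coefficients, and let `χ_r` have convergent `x`-coefficients.
Suppose `F₁,…,F_N ∈ ℂ[[z,x]]` are such that all `x`-coefficients of `F_N` are convergent
and `(F₁ + F_N²)·H + P₁(F₁,…,F_N) = χ₁` and `F_r·H + P_r(F₁,…,F_N) = χ_r` for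
`r = 2,…,N−1`.  Then all `x`-coefficients `F_{l,k}(z)`, `1 ≤ l ≤ N−1`, are convergent.

(Below indices are 0-based: `F` is indexed by `Fin N`, the equations by `Fin (N−1)`;
the equation of index `0` is the special one, and `F_N` is `F ⟨N−1,_⟩`.)
-/

open Complex

/-- total degree of a multi-index -/
def totalDeg {σ : Type*} (m : σ →₀ ℕ) : ℕ := m.sum fun _ e => e

/-- A multivariate formal power series is convergent (has positive radius of convergence)
iff its coefficients satisfy a bound `‖c_m‖ ≤ C · r^{|m|}`. -/
def PSConv {σ : Type*} (F : MvPowerSeries σ ℂ) : Prop :=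
  ∃ C r : ℝ, 0 < r ∧ ∀ m : σ →₀ ℕ, ‖MvPowerSeries.coeff m F‖ ≤ C * r ^ totalDeg m

/-- Joint convergence of a formal power series in `(z,x)`. -/
def PS2Conv {n : ℕ} (H : PowerSeries (MvPowerSeries (Fin n) ℂ)) : Prop :=
  ∃ C r : ℝ, 0 < r ∧ ∀ (k : ℕ) (m : Fin n →₀ ℕ),
    ‖MvPowerSeries.coeff m (PowerSeries.coeff k H)‖ ≤
      C * r ^ (k + totalDeg m)

/-!
Convergent power series in finitely many variables form a subring of `ℂ[[z]]`, in which an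
element with nonzero constant term is a unit: a majorant estimate bounds the coefficients of the
inverse by `‖g₀‖⁻¹ ρ^{|m|}` for `ρ` large. Since the coefficients of `P_r` vanish at `x = 0`, the
`x^k`-coefficient of `P_r(F)` only involves the `F_{l,j}` with `j < k`. Taking `x^k`-coefficients
in the `r`-th equation therefore expresses `G_{r,k} · H(z,0)`, where `G_r = F_r` (resp.
`F₁ + F_N²`), through convergent data, and induction on `k` shows that every `F_{l,k}` is
convergent.
-/

open Finset

section TotalDegree

variable {σ : Type*}

lemma totalDeg_eq_degree (m : σ →₀ ℕ) : totalDeg m = m.degree := rfl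

lemma totalDeg_add (m₁ m₂ : σ →₀ ℕ) : totalDeg (m₁ + m₂) = totalDeg m₁ + totalDeg m₂ :=
  map_add Finsupp.degree m₁ m₂

lemma card_antidiagonal_le_two_pow [DecidableEq σ] (m : σ →₀ ℕ) :
    #(antidiagonal m) ≤ 2 ^ totalDeg m := by
  calc #(antidiagonal m)
      ≤ Multiset.card ((Finsupp.toMultiset m).antidiagonal.map
          (Prod.map Multiset.toFinsupp Multiset.toFinsupp)) :=
        Multiset.toFinset_card_le _
    _ = 2 ^ totalDeg m := by
        rw [Multiset.card_map, Multiset.card_antidiagonal, Finsupp.card_toMultiset]; rfl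

lemma sum_antidiagonal_half_pow_le [Fintype σ] [DecidableEq σ] (m : σ →₀ ℕ) :
    ∑ p ∈ antidiagonal m, (1 / 2 : ℝ) ^ totalDeg p.1 ≤ 2 ^ Fintype.card σ := by
  let coeFst : (σ →₀ ℕ) × (σ →₀ ℕ) → σ → ℕ := fun p => p.1
  have hinj : Set.InjOn coeFst (antidiagonal m) := by
    intro p hp p' hp' h
    rw [mem_coe, HasAntidiagonal.mem_antidiagonal] at hp hp'
    have h1 : p.1 = p'.1 := DFunLike.coe_injective h
    exact Prod.ext h1 (add_left_cancel (a := p.1) (by rw [hp, h1, hp']))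
  calc ∑ p ∈ antidiagonal m, (1 / 2 : ℝ) ^ totalDeg p.1
      = ∑ g ∈ (antidiagonal m).image coeFst, ∏ i, (1 / 2 : ℝ) ^ g i := by
        rw [sum_image hinj]
        refine sum_congr rfl fun p _ => ?_
        rw [totalDeg_eq_degree, Finsupp.degree_eq_sum, prod_pow_eq_pow_sum]
    _ ≤ ∑ g ∈ Fintype.piFinset (fun i => range (m i + 1)), ∏ i, (1 / 2 : ℝ) ^ g i := by
        refine sum_le_sum_of_subset_of_nonneg ?_ fun _ _ _ => by positivity
        intro g hg
        obtain ⟨p, hp, rfl⟩ := mem_image.1 hg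
        rw [HasAntidiagonal.mem_antidiagonal] at hp
        refine Fintype.mem_piFinset.2 fun i => mem_range.2 (Nat.lt_succ_of_le ?_)
        rw [← hp]
        exact Nat.le_add_right _ _
    _ = ∏ i, ∑ j ∈ range (m i + 1), (1 / 2 : ℝ) ^ j := (prod_univ_sum _ _).symm
    _ ≤ ∏ _i : σ, (2 : ℝ) :=
        prod_le_prod (fun _ _ => by positivity) fun _ _ => sum_geometric_two_le _
    _ = 2 ^ Fintype.card σ := by rw [prod_const, card_univ]

end TotalDegree

lemma pow_mul_pow_le_of_ne_zero {r ε : ℝ} (hr : 0 ≤ r) (hε : 0 < ε) (hε1 : ε ≤ 1) {a : ℕ}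
    (ha : a ≠ 0) (b : ℕ) : r ^ a * (2 * r / ε) ^ b ≤ (2 * r / ε) ^ (a + b) * (ε * (1 / 2) ^ a) := by
  calc r ^ a * (2 * r / ε) ^ b = (2 * r / ε * (ε * (1 / 2))) ^ a * (2 * r / ε) ^ b := by
        congr 2; field_simp
    _ = (2 * r / ε) ^ (a + b) * (ε ^ a * (1 / 2) ^ a) := by rw [mul_pow, mul_pow, pow_add]; ring
    _ ≤ (2 * r / ε) ^ (a + b) * (ε * (1 / 2) ^ a) := by
        gcongr
        exact pow_le_of_le_one hε.le hε1 ha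

namespace PSConv

open MvPowerSeries

variable {σ : Type*} {F G : MvPowerSeries σ ℂ}

lemma exists_bound (hF : PSConv F) :
    ∃ C r : ℝ, 0 ≤ C ∧ 0 < r ∧ ∀ m, ‖coeff m F‖ ≤ C * r ^ totalDeg m := by
  obtain ⟨C, r, hr, hb⟩ := hF
  have hC : 0 ≤ C := by simpa [totalDeg_eq_degree] using (norm_nonneg _).trans (hb 0)
  exact ⟨C, r, hC, hr, hb⟩

lemma add (hF : PSConv F) (hG : PSConv G) : PSConv (F + G) := by
  obtain ⟨C₁, r₁, hC₁, hr₁, hb₁⟩ := hF.exists_bound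
  obtain ⟨C₂, r₂, hC₂, hr₂, hb₂⟩ := hG.exists_bound
  refine ⟨C₁ + C₂, max r₁ r₂, lt_max_of_lt_left hr₁, fun m => ?_⟩
  calc ‖coeff m (F + G)‖
      ≤ ‖coeff m F‖ + ‖coeff m G‖ := by
        rw [map_add]; exact norm_add_le _ _
    _ ≤ C₁ * r₁ ^ totalDeg m + C₂ * r₂ ^ totalDeg m := add_le_add (hb₁ m) (hb₂ m)
    _ ≤ C₁ * max r₁ r₂ ^ totalDeg m + C₂ * max r₁ r₂ ^ totalDeg m := by
        gcongr
        exacts [le_max_left _ _, le_max_right _ _]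
    _ = (C₁ + C₂) * max r₁ r₂ ^ totalDeg m := by ring

lemma neg (hF : PSConv F) : PSConv (-F) := by
  obtain ⟨C, r, hr, hb⟩ := hF
  exact ⟨C, r, hr, fun m => by simpa using hb m⟩

lemma mul (hF : PSConv F) (hG : PSConv G) : PSConv (F * G) := by
  classical
  obtain ⟨C₁, r₁, hC₁, hr₁, hb₁⟩ := hF.exists_bound
  obtain ⟨C₂, r₂, hC₂, hr₂, hb₂⟩ := hG.exists_bound
  set r := max r₁ r₂
  refine ⟨C₁ * C₂, 2 * r, by positivity, fun m => ?_⟩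
  have hterm : ∀ p ∈ antidiagonal m,
      ‖coeff p.1 F * coeff p.2 G‖ ≤ C₁ * C₂ * r ^ totalDeg m := by
    intro p hp
    rw [HasAntidiagonal.mem_antidiagonal] at hp
    calc ‖coeff p.1 F * coeff p.2 G‖
        ≤ C₁ * r₁ ^ totalDeg p.1 * (C₂ * r₂ ^ totalDeg p.2) := by
          rw [norm_mul]; exact mul_le_mul (hb₁ _) (hb₂ _) (norm_nonneg _) (by positivity)
      _ ≤ C₁ * r ^ totalDeg p.1 * (C₂ * r ^ totalDeg p.2) := by
          gcongr
          exacts [le_max_left _ _, le_max_right _ _]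
      _ = C₁ * C₂ * r ^ totalDeg m := by
          rw [← hp, totalDeg_add, pow_add]; ring
  calc ‖coeff m (F * G)‖
      ≤ #(antidiagonal m) * (C₁ * C₂ * r ^ totalDeg m) := by
        rw [coeff_mul]; exact norm_sum_le_of_le _ hterm |>.trans_eq (by simp)
    _ ≤ 2 ^ totalDeg m * (C₁ * C₂ * r ^ totalDeg m) := by
        gcongr; exact_mod_cast card_antidiagonal_le_two_pow m
    _ = C₁ * C₂ * (2 * r) ^ totalDeg m := by ring

/- Induction along the recursion `g₀ c_m = -∑_{a ≠ 0} G_a c_{m-a}` for the coefficients `c` of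
`G⁻¹`: with `ρ = 2r/ε`, the term of index `a` is at most `C ε (1/2)^{|a|} ‖g₀‖⁻¹ ρ^{|m|}`, and the
weights `(1/2)^{|a|}` sum to at most `2^{card σ}`. -/
lemma norm_coeff_inv_le [Fintype σ] {C r ε : ℝ} (hC : 0 ≤ C) (hr : 0 < r) (hε : 0 < ε)
    (hε1 : ε ≤ 1) (hb : ∀ m, ‖coeff m G‖ ≤ C * r ^ totalDeg m)
    (hsmall : C * ε * 2 ^ Fintype.card σ ≤ ‖constantCoeff G‖) (m : σ →₀ ℕ) :
    ‖coeff m G⁻¹‖ ≤ ‖constantCoeff G‖⁻¹ * (2 * r / ε) ^ totalDeg m := by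
  classical
  set δ := ‖constantCoeff G‖
  set ρ := 2 * r / ε
  induction m using WellFoundedLT.induction with | _ m ih =>
  rw [coeff_inv]
  split_ifs with hm
  · subst hm
    simp [δ, totalDeg_eq_degree]
  have hterm : ∀ p ∈ antidiagonal m,
      ‖if p.2 < m then coeff p.1 G * coeff p.2 G⁻¹ else 0‖ ≤
        δ⁻¹ * ρ ^ totalDeg m * (C * ε * (1 / 2) ^ totalDeg p.1) := by
    intro p hp
    rw [HasAntidiagonal.mem_antidiagonal] at hp
    split_ifs with hlt
    · have ha : totalDeg p.1 ≠ 0 := by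
        rw [totalDeg_eq_degree, Ne, Finsupp.degree_eq_zero_iff]
        rintro h
        rw [h, zero_add] at hp
        exact hlt.ne hp
      calc ‖coeff p.1 G * coeff p.2 G⁻¹‖
          ≤ C * r ^ totalDeg p.1 * (δ⁻¹ * ρ ^ totalDeg p.2) := by
            rw [norm_mul]; exact mul_le_mul (hb _) (ih _ hlt) (norm_nonneg _) (by positivity)
        _ = δ⁻¹ * C * (r ^ totalDeg p.1 * ρ ^ totalDeg p.2) := by ring
        _ ≤ δ⁻¹ * C * (ρ ^ (totalDeg p.1 + totalDeg p.2) * (ε * (1 / 2) ^ totalDeg p.1)) := by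
            gcongr ?_ * ?_
            exact pow_mul_pow_le_of_ne_zero hr.le hε hε1 ha _
        _ = δ⁻¹ * ρ ^ totalDeg m * (C * ε * (1 / 2) ^ totalDeg p.1) := by
            rw [← totalDeg_add, hp]; ring
    · rw [norm_zero]; positivity
  calc ‖-(constantCoeff G)⁻¹ * ∑ p ∈ antidiagonal m,
        if p.2 < m then coeff p.1 G * coeff p.2 G⁻¹ else 0‖
      ≤ δ⁻¹ * ∑ p ∈ antidiagonal m, δ⁻¹ * ρ ^ totalDeg m * (C * ε * (1 / 2) ^ totalDeg p.1) := by
        rw [norm_mul, norm_neg, norm_inv]; gcongr; exact norm_sum_le_of_le _ hterm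
    _ = δ⁻¹ * ρ ^ totalDeg m * (δ⁻¹ * (C * ε * ∑ p ∈ antidiagonal m, (1 / 2) ^ totalDeg p.1)) := by
        rw [← mul_sum, ← mul_sum]; ring
    _ ≤ δ⁻¹ * ρ ^ totalDeg m * (δ⁻¹ * (C * ε * 2 ^ Fintype.card σ)) := by
        gcongr; exact sum_antidiagonal_half_pow_le m
    _ ≤ δ⁻¹ * ρ ^ totalDeg m := by
        refine mul_le_of_le_one_right (by positivity) ?_
        exact inv_mul_le_one_of_le₀ hsmall (norm_nonneg _)

theorem inv [Finite σ] (hG : PSConv G) (h0 : constantCoeff G ≠ 0) : PSConv G⁻¹ := by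
  have := Fintype.ofFinite σ
  obtain ⟨C, r, hC, hr, hb⟩ := hG.exists_bound
  set δ := ‖constantCoeff G‖
  have hδ : 0 < δ := norm_pos_iff.2 h0
  set K := C * 2 ^ Fintype.card σ
  have hK : 0 ≤ K := by positivity
  refine ⟨δ⁻¹, 2 * r / (δ / (δ + K)), by positivity,
    norm_coeff_inv_le hC hr (by positivity) ((div_le_one (by positivity)).2 (by linarith)) hb ?_⟩
  calc C * (δ / (δ + K)) * 2 ^ Fintype.card σ = δ * (K / (δ + K)) := by ring
    _ ≤ δ * 1 := by gcongr; exact (div_le_one (by positivity)).2 (by linarith)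
    _ = δ := mul_one δ

end PSConv

def convergentSubring (σ : Type*) : Subring (MvPowerSeries σ ℂ) where
  carrier := {F | PSConv F}
  zero_mem' := ⟨0, 1, one_pos, fun m => by simp⟩
  one_mem' := ⟨1, 1, one_pos, fun m => by
    classical
    rw [MvPowerSeries.coeff_one]; split_ifs <;> simp⟩
  add_mem' := PSConv.add
  neg_mem' := PSConv.neg
  mul_mem' := PSConv.mul

lemma PS2Conv.psconv_coeff {n : ℕ} {H : PowerSeries (MvPowerSeries (Fin n) ℂ)} (hH : PS2Conv H)
    (k : ℕ) : PSConv (PowerSeries.coeff k H) := by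
  obtain ⟨C, r, hr, hb⟩ := hH
  exact ⟨C * r ^ k, r, hr, fun m => by simpa only [pow_add, mul_assoc] using hb k m⟩

namespace MvPolynomial

lemma eval_sub_eval_mem_mul {A ι : Type*} [CommRing A] {I J : Ideal A}
    (P : MvPolynomial ι A) (hP : ∀ m, P.coeff m ∈ I) {F F' : ι → A} (hF : ∀ i, F i - F' i ∈ J) :
    eval F P - eval F' P ∈ I * J := by
  rw [eval_eq, eval_eq, ← sum_sub_distrib]
  refine sum_mem fun m _ => ?_
  rw [← mul_sub]
  refine Ideal.mul_mem_mul (hP m) (Ideal.Quotient.eq.1 ?_)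
  simp only [map_prod, map_pow, Ideal.Quotient.eq.2 (hF _)]

end MvPolynomial

namespace PowerSeries

variable {R : Type*} [CommRing R] {S : Subring R}

lemma mem_range_map_subtype_iff {F : R⟦X⟧} :
    F ∈ (map S.subtype).range ↔ ∀ k, coeff k F ∈ S := by
  constructor
  · rintro ⟨G, rfl⟩ k
    simp
  · intro h
    exact ⟨mk fun k => ⟨coeff k F, h k⟩, by ext; simp⟩

lemma coe_trunc_mem_range_map_subtype {F : R⟦X⟧} {k : ℕ} (hF : ∀ j < k, coeff j F ∈ S) :
    (trunc k F : R⟦X⟧) ∈ (map S.subtype).range := by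
  refine mem_range_map_subtype_iff.2 fun j => ?_
  rw [Polynomial.coeff_coe, coeff_trunc]
  split_ifs with hj
  exacts [hF j hj, S.zero_mem]

lemma X_pow_dvd_sub_trunc (F : R⟦X⟧) (k : ℕ) : X ^ k ∣ F - (trunc k F : R⟦X⟧) := by
  refine X_pow_dvd_iff.2 fun j hj => ?_
  rw [map_sub, Polynomial.coeff_coe, coeff_trunc, if_pos hj, sub_self]

lemma coeff_mem_of_coeff_mul_mem {G H : R⟦X⟧} (hH : ∀ j, coeff j H ∈ S) {u : R} (hu : u ∈ S)
    (hu0 : u * coeff 0 H = 1) {k : ℕ} (hG : ∀ j < k, coeff j G ∈ S)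
    (hGH : coeff k (G * H) ∈ S) : coeff k G ∈ S := by
  have hsplit : coeff k (G * H) =
      ∑ i ∈ range k, coeff i G * coeff (k - i) H + coeff k G * coeff 0 H := by
    rw [coeff_mul, Finset.Nat.sum_antidiagonal_eq_sum_range_succ_mk, sum_range_succ, Nat.sub_self]
  have hsolve : coeff k G =
      u * (coeff k (G * H) - ∑ i ∈ range k, coeff i G * coeff (k - i) H) := by
    rw [hsplit]; linear_combination (-coeff k G) * hu0
  rw [hsolve]
  exact mul_mem hu (sub_mem hGH (sum_mem fun i hi => mul_mem (hG i (mem_range.1 hi)) (hH _)))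

variable {ι : Type*}

lemma coeff_eval_eq_coeff_eval_trunc {P : MvPolynomial ι R⟦X⟧}
    (hP0 : ∀ m, coeff 0 (P.coeff m) = 0) (F : ι → R⟦X⟧) (k : ℕ) :
    coeff k (MvPolynomial.eval F P) =
      coeff k (MvPolynomial.eval (fun i => (trunc k (F i) : R⟦X⟧)) P) := by
  have hP : ∀ m, P.coeff m ∈ Ideal.span {X} := fun m =>
    Ideal.mem_span_singleton.2 <| X_dvd_iff.2 <|
      (coeff_zero_eq_constantCoeff_apply _).symm.trans (hP0 m)
  have hdiff := MvPolynomial.eval_sub_eval_mem_mul (J := Ideal.span {X ^ k}) P hP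
    (F' := fun i => (trunc k (F i) : R⟦X⟧))
    fun i => Ideal.mem_span_singleton.2 (X_pow_dvd_sub_trunc (F i) k)
  rw [Ideal.span_singleton_mul_span_singleton, Ideal.mem_span_singleton, ← pow_succ'] at hdiff
  rw [← sub_eq_zero, ← map_sub]
  exact X_pow_dvd_iff.1 hdiff k k.lt_succ_self

lemma coeff_eval_mem {P : MvPolynomial ι R⟦X⟧} (hP0 : ∀ m, coeff 0 (P.coeff m) = 0)
    (hPS : ∀ m j, coeff j (P.coeff m) ∈ S) {F : ι → R⟦X⟧} {k : ℕ}
    (hF : ∀ i, ∀ j < k, coeff j (F i) ∈ S) : coeff k (MvPolynomial.eval F P) ∈ S := by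
  rw [coeff_eval_eq_coeff_eval_trunc hP0]
  refine mem_range_map_subtype_iff.1 (MvPolynomial.eval_mem ?_ ?_) k
  · exact fun m _ => mem_range_map_subtype_iff.2 (hPS m)
  · exact fun i => coe_trunc_mem_range_map_subtype (hF i)

lemma coeff_mem_of_mul_add_eval_eq {G H χ : R⟦X⟧} {P : MvPolynomial ι R⟦X⟧} {F : ι → R⟦X⟧}
    (heq : G * H + MvPolynomial.eval F P = χ) (hH : ∀ j, coeff j H ∈ S) {u : R} (hu : u ∈ S)
    (hu0 : u * coeff 0 H = 1) (hP0 : ∀ m, coeff 0 (P.coeff m) = 0)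
    (hPS : ∀ m j, coeff j (P.coeff m) ∈ S) (hχ : ∀ j, coeff j χ ∈ S) {k : ℕ}
    (hF : ∀ i, ∀ j < k, coeff j (F i) ∈ S) (hG : ∀ j < k, coeff j G ∈ S) : coeff k G ∈ S := by
  refine coeff_mem_of_coeff_mul_mem hH hu hu0 hG ?_
  rw [eq_sub_of_add_eq heq, map_sub]
  exact sub_mem (hχ k) (coeff_eval_mem hP0 hPS hF)

end PowerSeries

theorem statement6 (n : ℕ) (N : ℕ) (hN : 2 ≤ N)
    (H : PowerSeries (MvPowerSeries (Fin n) ℂ))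
    (hHconv : PS2Conv H)
    (hH0 : MvPowerSeries.constantCoeff
        (PowerSeries.coeff 0 H) ≠ 0)
    -- the polynomials `P_r`, `r = 1,…,N−1`, in `N` variables with power-series coefficients
    (P : Fin (N - 1) → MvPolynomial (Fin N) (PowerSeries (MvPowerSeries (Fin n) ℂ)))
    -- every coefficient of every `P_r` has no term independent of `x` ...
    (hP0 : ∀ (r : Fin (N - 1)) (m : Fin N →₀ ℕ),
      PowerSeries.coeff 0 (MvPolynomial.coeff m (P r)) = 0)
    -- ... and all its `x`-coefficients are convergent
    (hPconv : ∀ (r : Fin (N - 1)) (m : Fin N →₀ ℕ) (k : ℕ),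
      PSConv (PowerSeries.coeff k (MvPolynomial.coeff m (P r))))
    (χ : Fin (N - 1) → PowerSeries (MvPowerSeries (Fin n) ℂ))
    (hχconv : ∀ (r : Fin (N - 1)) (k : ℕ),
      PSConv (PowerSeries.coeff k (χ r)))
    (F : Fin N → PowerSeries (MvPowerSeries (Fin n) ℂ))
    -- all `x`-coefficients of `F_N` are convergent
    (hFN : ∀ k : ℕ, PSConv (PowerSeries.coeff k
      (F ⟨N - 1, by omega⟩)))
    -- the first equation: `(F₁ + F_N²)·H + P₁(F₁,…,F_N) = χ₁`
    (heq1 : (F ⟨0, by omega⟩ + F ⟨N - 1, by omega⟩ ^ 2) * H +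
        MvPolynomial.eval F (P ⟨0, by omega⟩) = χ ⟨0, by omega⟩)
    -- the remaining equations: `F_r·H + P_r(F₁,…,F_N) = χ_r` for `r = 2,…,N−1`
    (heqr : ∀ r : Fin (N - 1), r ≠ ⟨0, by omega⟩ →
      F ⟨r.1, by omega⟩ * H + MvPolynomial.eval F (P r) = χ r) :
    ∀ l : Fin N, l ≠ ⟨N - 1, by omega⟩ →
      ∀ k : ℕ, PSConv (PowerSeries.coeff k (F l)) := by
  set S := convergentSubring (Fin n)
  have hu : (PowerSeries.coeff 0 H)⁻¹ ∈ S := (hHconv.psconv_coeff 0).inv hH0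
  have hFN2 : ∀ j, PowerSeries.coeff j (F ⟨N - 1, by omega⟩ ^ 2) ∈ S :=
    PowerSeries.mem_range_map_subtype_iff.1 <|
      pow_mem (PowerSeries.mem_range_map_subtype_iff.2 hFN) 2
  have key : ∀ k l, PowerSeries.coeff k (F l) ∈ S := by
    intro k
    induction k using Nat.strong_induction_on with | _ k ih =>
    have step := fun {G : PowerSeries (MvPowerSeries (Fin n) ℂ)} (r : Fin (N - 1))
        (heq : G * H + MvPolynomial.eval F (P r) = χ r) (hG : ∀ j < k, PowerSeries.coeff j G ∈ S) =>
      PowerSeries.coeff_mem_of_mul_add_eval_eq heq hHconv.psconv_coeff hu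
        (MvPowerSeries.inv_mul_cancel _ hH0) (hP0 r) (hPconv r) (hχconv r)
        (fun i j hj => ih j hj i) hG
    rintro ⟨l, hl⟩
    by_cases hlast : l = N - 1
    · subst hlast; exact hFN k
    by_cases hr : (⟨l, by omega⟩ : Fin (N - 1)) = ⟨0, by omega⟩
    · obtain rfl : l = 0 := Fin.mk.inj hr
      have hG := step _ heq1 fun j hj => add_mem (ih j hj _) (hFN2 j)
      rw [map_add] at hG
      simpa using sub_mem hG (hFN2 k)
    · exact step _ (heqr ⟨l, _⟩ hr) fun j hj => ih j hj _
  exact fun l _ k => key k l
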